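/- arXiv:1304.6628 — 4 statements merged into one kernel-verified Lean document; each statement's English description precedes it below -/
import Mathlib

section
/- Let X be a countably compact topological space and (Y,d) a metric space. Then the graph topology on C(X,Y) coincides with the topology of uniform convergence; that is, for every f ∈ C(X,Y) and every strictly positive lower semicontinuous ε : X → ℝ there exists c > 0 with {g : ∀ x, d(f(x),g(x)) < c} ⊆ B(f,ε), and conversely every uniform ball B(f,c) with constant c > 0 is of the form B(f,ε) with ε lower semicontinuous and strictly positive. -/
/-- A space is countably compact if every countable open cover has a finite subcover. -/
def CountablyCompact (X : Type*) [TopologicalSpace X] : Prop :=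
  ∀ U : ℕ → Set X, (∀ n, IsOpen (U n)) → (⋃ n, U n) = Set.univ →
    ∃ s : Finset ℕ, (⋃ n ∈ s, U n) = Set.univ

/-- The basic set `B(f,ε)` of the graph topology. -/
def gball {X Y : Type*} [TopologicalSpace X] [MetricSpace Y]
    (f : C(X, Y)) (ε : X → ℝ) : Set C(X, Y) :=
  {g | ∀ x, dist (f x) (g x) < ε x}

/-!
On a countably compact space a strictly positive lower semicontinuous `ε` is bounded below by a
positive constant: the open sets `{x | 1/(n+1) < ε x}` increase and cover `X`, so one of them is
already all of `X`. A uniform ball of that radius then lies inside `B(f,ε)`; conversely a uniform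
ball of radius `c` is `B(f,ε)` for the constant `ε = c`.
-/

theorem CountablyCompact.exists_eq_univ_of_monotone {X : Type*} [TopologicalSpace X]
    (hX : CountablyCompact X) {U : ℕ → Set X} (hopen : ∀ n, IsOpen (U n)) (hmono : Monotone U)
    (hcover : (⋃ n, U n) = Set.univ) : ∃ n, U n = Set.univ := by
  obtain ⟨s, hs⟩ := hX U hopen hcover
  refine ⟨s.sup id, Set.eq_univ_of_univ_subset (hs ▸ Set.iUnion₂_subset fun n hn => ?_)⟩
  exact hmono (Finset.le_sup (f := id) hn)

theorem CountablyCompact.exists_pos_lt_of_lowerSemicontinuous {X : Type*} [TopologicalSpace X]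
    (hX : CountablyCompact X) {ε : X → ℝ} (hε : LowerSemicontinuous ε) (hpos : ∀ x, 0 < ε x) :
    ∃ c > 0, ∀ x, c < ε x := by
  have hmono : Monotone fun n : ℕ => {x | (1 : ℝ) / (n + 1) < ε x} := fun _ _ hmn _ hx =>
    (Nat.one_div_le_one_div hmn).trans_lt (α := ℝ) hx
  have hcover : (⋃ n : ℕ, {x | (1 : ℝ) / (n + 1) < ε x}) = Set.univ :=
    Set.eq_univ_of_forall fun x => Set.mem_iUnion.mpr (exists_nat_one_div_lt (hpos x))
  obtain ⟨n, hn⟩ := hX.exists_eq_univ_of_monotone (fun n => hε.isOpen_preimage _) hmono hcover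
  exact ⟨1 / (n + 1), Nat.one_div_pos_of_nat, fun x => (hn ▸ Set.mem_univ x : x ∈ _)⟩

theorem setOf_forall_dist_lt_subset_gball {X Y : Type*} [TopologicalSpace X] [MetricSpace Y]
    (f : C(X, Y)) {ε : X → ℝ} {c : ℝ} (hc : ∀ x, c < ε x) :
    {g : C(X, Y) | ∀ x, dist (f x) (g x) < c} ⊆ gball f ε :=
  fun _ hg x => (hg x).trans (hc x)

theorem stmt4_general {X Y : Type*} [TopologicalSpace X] [MetricSpace Y]
    (hX : CountablyCompact X) :
    (∀ (f : C(X, Y)) (ε : X → ℝ), LowerSemicontinuous ε → (∀ x, 0 < ε x) →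
      ∃ c > 0, {g : C(X, Y) | ∀ x, dist (f x) (g x) < c} ⊆ gball f ε) ∧
    (∀ (f : C(X, Y)) (c : ℝ), 0 < c →
      ∃ ε : X → ℝ, LowerSemicontinuous ε ∧ (∀ x, 0 < ε x) ∧
        gball f ε = {g : C(X, Y) | ∀ x, dist (f x) (g x) < c}) := by
  refine ⟨fun f ε hε hpos => ?_,
    fun f c hc => ⟨fun _ => c, lowerSemicontinuous_const, fun _ => hc, rfl⟩⟩
  obtain ⟨c, hc, hcε⟩ := hX.exists_pos_lt_of_lowerSemicontinuous hε hpos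
  exact ⟨c, hc, setOf_forall_dist_lt_subset_gball f hcε⟩

theorem stmt4 {X Y : Type*} [TopologicalSpace X] [Nonempty X] [MetricSpace Y]
    (hX : CountablyCompact X) :
    (∀ (f : C(X, Y)) (ε : X → ℝ), LowerSemicontinuous ε → (∀ x, 0 < ε x) →
      ∃ c > 0, {g : C(X, Y) | ∀ x, dist (f x) (g x) < c} ⊆ gball f ε) ∧
    (∀ (f : C(X, Y)) (c : ℝ), 0 < c →
      ∃ ε : X → ℝ, LowerSemicontinuous ε ∧ (∀ x, 0 < ε x) ∧
        gball f ε = {g : C(X, Y) | ∀ x, dist (f x) (g x) < c}) :=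
  stmt4_general hX
end

section
/- If X is a Tychonoff space such that C(X) with the fine topology is hereditarily Baire, then X is pseudocompact. -/
/-!
An unbounded `f ∈ C(X)` yields points `x n` with `|f (x n)| → ∞`. They form a closed discrete
set along which any positive sequence is dominated by a positive continuous weight (a Lipschitz
function of `f`), so the set `F` of functions vanishing at almost all `x n` is closed in the fine
topology. It is the union of the closed sets `A k` of functions vanishing at all `x n` with
`n ≥ k`, and each `A k` is nowhere dense in `F`: adding a small bump at a far point `x m` that
vanishes at the other `x n` leaves `A k` inside any fine neighbourhood. So `F` is not Baire.
-/

/-- A space is pseudocompact if every continuous real-valued function on it is bounded. -/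
def Pseudocompact (X : Type*) [TopologicalSpace X] : Prop :=
  ∀ f : C(X, ℝ), ∃ M : ℝ, ∀ x, |f x| ≤ M

/-- The fine topology on `C(X,ℝ)`, generated by the sets `B(f,ε)` with `ε` strictly
positive and continuous. -/
def fineTop (X : Type*) [TopologicalSpace X] : TopologicalSpace C(X, ℝ) :=
  TopologicalSpace.generateFrom
    {S | ∃ (f : C(X, ℝ)) (ε : C(X, ℝ)), (∀ x, 0 < ε x) ∧
      S = {g : C(X, ℝ) | ∀ x, |f x - g x| < ε x}}

open Set Filter Topology TopologicalSpace

theorem exists_continuous_pos_le_of_tendsto_atTop {t : ℕ → ℝ} (ht : Tendsto t atTop atTop) {c : ℕ → ℝ}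
    (hc : ∀ n, 0 < c n) : ∃ ψ : C(ℝ, ℝ), (∀ s, 0 < ψ s) ∧ ∀ n, ψ (t n) ≤ c n := by
  have hbdd : ∀ s, BddBelow (range fun n => c n + |s - t n|) := fun s =>
    ⟨0, by rintro _ ⟨n, rfl⟩; exact add_nonneg (hc n).le (abs_nonneg _)⟩
  let ψ : ℝ → ℝ := fun s => ⨅ n, (c n + |s - t n|)
  have hlip : LipschitzWith 1 ψ := LipschitzWith.of_le_add fun s u => by
    rw [← sub_le_iff_le_add]
    refine le_ciInf fun n => ?_
    rw [sub_le_iff_le_add, Real.dist_eq]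
    calc ψ s ≤ c n + |s - t n| := ciInf_le (hbdd s) n
      _ ≤ c n + (|s - u| + |u - t n|) := by gcongr; exact abs_sub_le s u (t n)
      _ = c n + |u - t n| + |s - u| := by ring
  refine ⟨⟨ψ, hlip.continuous⟩, fun s => ?_, fun n => by
    simpa using ciInf_le (hbdd (t n)) n⟩
  -- the infimum is attained since the terms tend to infinity
  have hcof : Tendsto (fun n => c n + |s - t n|) cofinite atTop := by
    rw [Nat.cofinite_eq_atTop]
    refine tendsto_atTop_mono (fun n => le_add_of_nonneg_left (hc n).le) ?_
    simpa only [Function.comp_def, abs_sub_comm, ← sub_eq_add_neg] using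
      tendsto_abs_atTop_atTop.comp (tendsto_atTop_add_const_right _ (-s) ht)
  obtain ⟨n₀, hn₀⟩ := hcof.exists_forall_le
  exact (add_pos_of_pos_of_nonneg (hc n₀) (abs_nonneg _)).trans_le (le_ciInf hn₀)

section

variable {X : Type*} [TopologicalSpace X]

theorem exists_tendsto_atTop_of_not_pseudocompact (h : ¬ Pseudocompact X) :
    ∃ (f : C(X, ℝ)) (x : ℕ → X), Tendsto (f ∘ x) atTop atTop := by
  simp only [Pseudocompact, not_forall, not_exists, not_le] at h
  obtain ⟨f, hf⟩ := h
  choose x hx using fun n : ℕ => hf n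
  exact ⟨|f|, x, tendsto_atTop_mono (fun n => (hx n).le) tendsto_natCast_atTop_atTop⟩

theorem isClosed_image_of_tendsto_atTop [T1Space X] {f : C(X, ℝ)} {x : ℕ → X}
    (hx : Tendsto (f ∘ x) atTop atTop) (I : Set ℕ) : IsClosed (x '' I) := by
  have hlf : LocallyFinite fun n => ({x n} : Set X) := fun y => by
    refine ⟨f ⁻¹' Iio (f y + 1),
      f.continuous.continuousAt.preimage_mem_nhds (Iio_mem_nhds (lt_add_one _)), ?_⟩
    have := (Nat.cofinite_eq_atTop ▸ hx).eventually_ge_atTop (f y + 1)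
    refine (eventually_cofinite.1 this).subset ?_
    rintro n ⟨_, rfl, hn⟩
    exact not_le.2 hn
  rw [image_eq_range, ← iUnion_singleton_eq_range]
  exact (hlf.comp_injective Subtype.val_injective).isClosed_iUnion fun _ => isClosed_singleton

theorem exists_bump_lt [CompletelyRegularSpace X] {p : X} {K : Set X} (hK : IsClosed K)
    (hp : p ∉ K) {δ : C(X, ℝ)} (hδ : ∀ y, 0 < δ y) :
    ∃ φ : C(X, ℝ), φ p ≠ 0 ∧ EqOn φ 0 K ∧ ∀ y, |φ y| < δ y := by
  set c := δ p / 2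
  have hc : 0 < c := half_pos (hδ p)
  -- cutting off where `δ ≤ c` keeps a bump of height `c` below `δ`
  set L := K ∪ {y | δ y ≤ c}
  have hL : IsClosed L := hK.union (isClosed_le δ.continuous continuous_const)
  have hpL : p ∉ L := by
    rintro (h | h)
    exacts [hp h, (half_lt_self (hδ p)).not_ge h]
  obtain ⟨u, hu, hup, huL⟩ := CompletelyRegularSpace.completely_regular p L hL hpL
  refine ⟨c • (1 - ⟨fun y => (u y : ℝ), continuous_subtype_val.comp hu⟩), ?_,
    fun y hy => ?_, fun y => ?_⟩
  · simp [hup, hc.ne']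
  · simp [huL (Or.inl hy)]
  · by_cases hy : y ∈ L
    · simp [huL hy, hδ y]
    · have hcy : c < δ y := not_le.1 fun h => hy (Or.inr h)
      have h0 := (u y).2.1
      have h1 := (u y).2.2
      calc |c * (1 - (u y : ℝ))| = c * (1 - u y) := abs_of_nonneg (by nlinarith)
        _ ≤ c := by nlinarith
        _ < δ y := hcy

def fineBall (g ε : C(X, ℝ)) : Set C(X, ℝ) := {h | ∀ x, |g x - h x| < ε x}

theorem exists_fineBall_subset {U : Set C(X, ℝ)} (hU : IsOpen[fineTop X] U) {g : C(X, ℝ)}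
    (hg : g ∈ U) : ∃ ε : C(X, ℝ), (∀ x, 0 < ε x) ∧ fineBall g ε ⊆ U := by
  change GenerateOpen _ U at hU
  induction hU generalizing g with
  | basic S hS =>
    obtain ⟨f, ε, -, rfl⟩ := hS
    refine ⟨ε - |f - g|, fun x => by simpa using hg x, fun h hh x => ?_⟩
    have hhx : |g x - h x| < ε x - |f x - g x| := by simpa using hh x
    calc |f x - h x| ≤ |f x - g x| + |g x - h x| := abs_sub_le _ _ _
      _ < ε x := by linarith
  | univ => exact ⟨1, fun _ => one_pos, subset_univ _⟩
  | inter S T _ _ ihS ihT =>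
    obtain ⟨ε₁, hε₁, h₁⟩ := ihS hg.1
    obtain ⟨ε₂, hε₂, h₂⟩ := ihT hg.2
    exact ⟨ε₁ ⊓ ε₂, fun x => lt_min (hε₁ x) (hε₂ x), fun h hh =>
      ⟨h₁ fun x => (hh x).trans_le (min_le_left _ _),
        h₂ fun x => (hh x).trans_le (min_le_right _ _)⟩⟩
  | sUnion 𝒮 _ ih =>
    obtain ⟨S, hS, hgS⟩ := hg
    obtain ⟨ε, hε, hsub⟩ := ih S hS hgS
    exact ⟨ε, hε, hsub.trans (subset_sUnion_of_mem hS)⟩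

theorem fineTop_nhds_hasBasis (g : C(X, ℝ)) :
    (@nhds _ (fineTop X) g).HasBasis (fun ε : C(X, ℝ) => ∀ x, 0 < ε x) (fineBall g) := by
  let _ : TopologicalSpace C(X, ℝ) := fineTop X
  refine ⟨fun U => ⟨fun hU => ?_, fun ⟨ε, hε, hsub⟩ => mem_of_superset ?_ hsub⟩⟩
  · obtain ⟨V, hVU, hV, hgV⟩ := mem_nhds_iff.1 hU
    obtain ⟨ε, hε, hsub⟩ := exists_fineBall_subset hV hgV
    exact ⟨ε, hε, hsub.trans hVU⟩
  · exact IsOpen.mem_nhds (.basic _ ⟨g, ε, hε, rfl⟩) fun x => by simpa using hε x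

theorem continuous_eval_fineTop (p : X) :
    Continuous[fineTop X, inferInstance] fun g : C(X, ℝ) => g p := by
  let _ : TopologicalSpace C(X, ℝ) := fineTop X
  refine continuous_iff_continuousAt.2 fun g =>
    ((fineTop_nhds_hasBasis g).tendsto_iff Metric.nhds_basis_ball).2 fun r hr =>
      ⟨.const X r, fun _ => hr, fun h hh => ?_⟩
  simpa [Real.dist_eq, abs_sub_comm] using hh p

def eventuallyZeroAlong (x : ℕ → X) : Set C(X, ℝ) := {g | ∀ᶠ n in atTop, g (x n) = 0}

theorem zero_mem_eventuallyZeroAlong (x : ℕ → X) : 0 ∈ eventuallyZeroAlong x :=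
  Eventually.of_forall fun _ => rfl

variable {f : C(X, ℝ)} {x : ℕ → X}

theorem isClosed_eventuallyZeroAlong (hx : Tendsto (f ∘ x) atTop atTop) :
    IsClosed[fineTop X] (eventuallyZeroAlong x) := by
  let _ : TopologicalSpace C(X, ℝ) := fineTop X
  refine isOpen_compl_iff.1 (isOpen_iff_mem_nhds.2 fun g hg => ?_)
  obtain ⟨ψ, hψ, hψg⟩ := exists_continuous_pos_le_of_tendsto_atTop hx
    (c := fun n => if g (x n) = 0 then 1 else |g (x n)|)
    (fun n => by split_ifs with h; exacts [one_pos, abs_pos.2 h])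
  -- a function `ψ ∘ f`-close to `g` cannot vanish where `g` does not
  refine mem_of_superset ((fineTop_nhds_hasBasis g).mem_of_mem (i := ψ.comp f) fun y => hψ _)
    fun h hh hh0 => hg ?_
  filter_upwards [hh0] with n hn
  by_contra hgn
  have hle : ψ (f (x n)) ≤ |g (x n)| := by simpa [hgn] using hψg n
  have hlt : |g (x n)| < ψ (f (x n)) := by simpa [hn] using hh (x n)
  exact hlt.not_ge hle

theorem exists_mem_fineBall_ne_zero [T1Space X] [CompletelyRegularSpace X]
    (hx : Tendsto (f ∘ x) atTop atTop) {g : C(X, ℝ)} (hg : g ∈ eventuallyZeroAlong x)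
    {δ : C(X, ℝ)} (hδ : ∀ y, 0 < δ y) (k : ℕ) :
    ∃ h ∈ eventuallyZeroAlong x ∩ fineBall g δ, ∃ n ≥ k, h (x n) ≠ 0 := by
  obtain ⟨m, hgm, hmk⟩ := (hg.and (eventually_ge_atTop k)).exists
  obtain ⟨φ, hφm, hφK, hφδ⟩ :=
    exists_bump_lt (isClosed_image_of_tendsto_atTop hx {n | x n ≠ x m}) (p := x m)
      (by rintro ⟨n, hn, h⟩; exact hn h) hδ
  have hxm : ∀ᶠ n in atTop, x n ≠ x m :=
    (hx.eventually_gt_atTop (f (x m))).mono fun n hn h => hn.ne' (by simp [h])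
  refine ⟨g + φ, ⟨?_, fun y => by simpa using hφδ y⟩, m, hmk, by simpa [hgm] using hφm⟩
  filter_upwards [hg, hxm] with n hn hnm
  simp [hn, hφK (mem_image_of_mem x hnm)]

theorem not_baireSpace_eventuallyZeroAlong [T1Space X] [CompletelyRegularSpace X]
    (hx : Tendsto (f ∘ x) atTop atTop) :
    ¬ @BaireSpace (eventuallyZeroAlong x) (.induced Subtype.val (fineTop X)) := by
  let _ : TopologicalSpace C(X, ℝ) := fineTop X
  intro _
  set F := eventuallyZeroAlong x
  have : Nonempty F := ⟨⟨0, zero_mem_eventuallyZeroAlong x⟩⟩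
  let A : ℕ → Set F := fun k => {g | ∀ n ≥ k, (g : C(X, ℝ)) (x n) = 0}
  have hA_closed : ∀ k, IsClosed (A k) := fun k => by
    simp only [A, ofPred_forall]
    exact isClosed_biInter fun n _ =>
      isClosed_eq ((continuous_eval_fineTop (x n)).comp continuous_subtype_val) continuous_const
  have hA_cover : ⋃ k, A k = univ :=
    eq_univ_of_forall fun g => mem_iUnion.2 (eventually_atTop.1 g.2)
  obtain ⟨k, g, hg⟩ := nonempty_interior_of_iUnion_of_closed hA_closed hA_cover
  rw [mem_interior_iff_mem_nhds, nhds_induced] at hg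
  obtain ⟨δ, hδ, hsub⟩ :=
    ((fineTop_nhds_hasBasis (g : C(X, ℝ))).comap Subtype.val).mem_iff.1 hg
  obtain ⟨h, ⟨hF, hball⟩, n, hnk, hn⟩ := exists_mem_fineBall_ne_zero hx g.2 hδ k
  exact hn (hsub (show (⟨h, hF⟩ : F) ∈ Subtype.val ⁻¹' fineBall g δ from hball) n hnk)

end

theorem stmt10 {X : Type*} [TopologicalSpace X] [T1Space X] [CompletelyRegularSpace X]
    (h : ∀ F : Set C(X, ℝ), F.Nonempty → @IsClosed C(X, ℝ) (fineTop X) F →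
      @BaireSpace F (TopologicalSpace.induced Subtype.val (fineTop X))) :
    Pseudocompact X := by
  by_contra hX
  obtain ⟨f, x, hx⟩ := exists_tendsto_atTop_of_not_pseudocompact hX
  exact not_baireSpace_eventuallyZeroAlong hx
    (h _ ⟨0, zero_mem_eventuallyZeroAlong x⟩ (isClosed_eventuallyZeroAlong hx))
end

section
/- If X is a pseudocompact Tychonoff space, then the fine topology on C(X) coincides with the topology of uniform convergence and is completely metrizable. -/
/-! On a pseudocompact space the reciprocal of a positive continuous function is bounded, so
every positive continuous `ε` is bounded below by a positive constant. Hence each fine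
neighbourhood `B(f, ε)` contains a uniform ball around each of its points, while uniform balls
contain the fine neighbourhoods with constant `ε`. Completeness is that of uniform convergence:
the truncated sup metric induces the uniformity of `X →ᵤ ℝ`, which is complete, and the
continuous functions form a closed subset of it. -/

open Filter Topology

lemma Pseudocompact.exists_pos_le {X : Type*} [TopologicalSpace X] (hX : Pseudocompact X)
    (h : C(X, ℝ)) (hpos : ∀ x, 0 < h x) : ∃ δ > 0, ∀ x, δ ≤ h x := by
  obtain ⟨M, hM⟩ := hX ⟨fun x ↦ (h x)⁻¹, h.continuous.inv₀ fun x ↦ (hpos x).ne'⟩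
  refine ⟨(max M 1)⁻¹, by positivity, fun x ↦ ?_⟩
  rw [inv_le_comm₀ (by positivity) (hpos x)]
  exact (le_abs_self _).trans ((hM x).trans (le_max_left _ _))

lemma min_add_le_min_add_min {a b c : ℝ} (hc : 0 ≤ c) (ha : 0 ≤ a) (hb : 0 ≤ b) :
    min c (a + b) ≤ min c a + min c b := by
  simp only [min_def]
  split_ifs <;> linarith

/-- A type synonym for `C(X, β)`, carrying the metric `⨆ x, min 1 (dist (f x) (g x))` of
uniform convergence instead of the compact-open topology. -/
def ContinuousMapUnif (X β : Type*) [TopologicalSpace X] [MetricSpace β] : Type _ := C(X, β)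

namespace ContinuousMapUnif

variable {X β : Type*} [TopologicalSpace X] [MetricSpace β]

instance : FunLike (ContinuousMapUnif X β) X β := inferInstanceAs (FunLike C(X, β) X β)

instance : ContinuousMapClass (ContinuousMapUnif X β) X β :=
  inferInstanceAs (ContinuousMapClass C(X, β) X β)

noncomputable instance : Dist (ContinuousMapUnif X β) :=
  ⟨fun f g ↦ ⨆ x, min 1 (dist (f x) (g x))⟩

lemma dist_def (f g : ContinuousMapUnif X β) : dist f g = ⨆ x, min 1 (dist (f x) (g x)) := rfl

lemma min_one_dist_apply_le_dist (f g : ContinuousMapUnif X β) (x : X) :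
    min 1 (dist (f x) (g x)) ≤ dist f g :=
  le_ciSup (f := fun x ↦ min 1 (dist (f x) (g x)))
    ⟨1, by rintro _ ⟨x, rfl⟩; exact min_le_left _ _⟩ x

lemma dist_le_of_forall_dist_apply_le {f g : ContinuousMapUnif X β} {r : ℝ} (hr : 0 ≤ r)
    (h : ∀ x, dist (f x) (g x) ≤ r) : dist f g ≤ r :=
  Real.iSup_le (fun x ↦ (min_le_right _ _).trans (h x)) hr

lemma dist_apply_lt_of_dist_lt {f g : ContinuousMapUnif X β} {r : ℝ} (hr : r ≤ 1)
    (h : dist f g < r) (x : X) : dist (f x) (g x) < r :=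
  (min_lt_iff.mp ((min_one_dist_apply_le_dist f g x).trans_lt h)).resolve_left hr.not_gt

noncomputable instance : MetricSpace (ContinuousMapUnif X β) where
  dist_self f := by simp [dist_def]
  dist_comm f g := by simp only [dist_def, dist_comm]
  dist_triangle f g h := by
    have nonneg (f g : ContinuousMapUnif X β) : 0 ≤ dist f g :=
      Real.iSup_nonneg fun _ ↦ by positivity
    refine Real.iSup_le (fun x ↦ ?_) (add_nonneg (nonneg f g) (nonneg g h))
    calc min 1 (dist (f x) (h x)) ≤ min 1 (dist (f x) (g x) + dist (g x) (h x)) :=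
          min_le_min_left _ (dist_triangle _ _ _)
      _ ≤ min 1 (dist (f x) (g x)) + min 1 (dist (g x) (h x)) :=
          min_add_le_min_add_min zero_le_one dist_nonneg dist_nonneg
      _ ≤ dist f g + dist g h :=
          add_le_add (min_one_dist_apply_le_dist f g x) (min_one_dist_apply_le_dist g h x)
  eq_of_dist_eq_zero {f g} hfg := DFunLike.ext f g fun x ↦ dist_le_zero.mp <|
    (min_le_iff.mp (hfg ▸ min_one_dist_apply_le_dist f g x)).resolve_left (by norm_num)

lemma isUniformInducing_ofFun :
    IsUniformInducing fun f : ContinuousMapUnif X β ↦ UniformFun.ofFun (f : X → β) := by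
  rw [Metric.uniformity_basis_dist.isUniformInducing_iff
    (UniformFun.hasBasis_uniformity_of_basis X β Metric.uniformity_basis_dist)]
  refine ⟨fun ε hε ↦ ⟨min ε 1, lt_min hε one_pos, fun f g hfg x ↦ ?_⟩,
    fun δ hδ ↦ ⟨δ / 2, half_pos hδ, fun f g hfg ↦ ?_⟩⟩
  · exact (dist_apply_lt_of_dist_lt (min_le_right _ _) hfg x).trans_le (min_le_left _ _)
  · exact (dist_le_of_forall_dist_apply_le (half_pos hδ).le fun x ↦ (hfg x).le).trans_lt
      (half_lt_self hδ)

lemma range_ofFun : Set.range (fun f : ContinuousMapUnif X β ↦ UniformFun.ofFun (f : X → β)) =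
    {f | Continuous (UniformFun.toFun f)} := by
  ext f
  exact ⟨by rintro ⟨f, rfl⟩; exact ContinuousMap.continuous f, fun hf ↦ ⟨⟨_, hf⟩, rfl⟩⟩

instance [CompleteSpace β] : CompleteSpace (ContinuousMapUnif X β) := by
  rw [completeSpace_iff_isComplete_range isUniformInducing_ofFun, range_ofFun]
  exact (UniformFun.isClosed_setOfPred_continuous (α := X) (β := β)).isComplete

lemma isOpen_setOf_forall_abs_sub_lt (hX : Pseudocompact X) (f ε : C(X, ℝ)) :
    IsOpen {g : ContinuousMapUnif X ℝ | ∀ x, |f x - g x| < ε x} := by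
  refine Metric.isOpen_iff.mpr fun g hg ↦ ?_
  obtain ⟨δ, hδ, hδle⟩ :=
    hX.exists_pos_le ⟨fun x ↦ ε x - |f x - g x|, by fun_prop⟩ fun x ↦ sub_pos.mpr (hg x)
  refine ⟨min δ 1, lt_min hδ one_pos, fun g' hg' x ↦ ?_⟩
  have hgg' : |g' x - g x| < min δ 1 := dist_apply_lt_of_dist_lt (min_le_right _ _) hg' x
  have hgap : δ ≤ ε x - |f x - g x| := hδle x
  linarith [abs_sub_le (f x) (g x) (g' x), abs_sub_comm (g' x) (g x), min_le_left δ 1]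

variable (X) in
lemma fineTop_le : fineTop X ≤ (inferInstance : TopologicalSpace (ContinuousMapUnif X ℝ)) := by
  refine (le_iff_nhds (α := ContinuousMapUnif X ℝ) _ _).mpr fun g ↦
    Metric.nhds_basis_closedBall.ge_iff.mpr fun r hr ↦ ?_
  have hopen : IsOpen[fineTop X] {h : ContinuousMapUnif X ℝ | ∀ x, |g x - h x| < r} :=
    TopologicalSpace.isOpen_generateFrom_of_mem ⟨g, .const X r, fun _ ↦ hr, rfl⟩
  refine mem_of_superset
    (@IsOpen.mem_nhds _ (fineTop X) _ _ hopen fun x ↦ by rwa [sub_self, abs_zero])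
    fun h hh ↦ dist_le_of_forall_dist_apply_le hr.le fun x ↦ ?_
  rw [Real.dist_eq, abs_sub_comm]
  exact (hh x).le

lemma le_fineTop (hX : Pseudocompact X) :
    (inferInstance : TopologicalSpace (ContinuousMapUnif X ℝ)) ≤ fineTop X := by
  refine le_generateFrom ?_
  rintro _ ⟨f, ε, -, rfl⟩
  exact isOpen_setOf_forall_abs_sub_lt hX f ε

end ContinuousMapUnif

theorem stmt11_general {X : Type*} [TopologicalSpace X]
    (hX : Pseudocompact X) :
    ∃ m : MetricSpace C(X, ℝ),
      (∀ f g : C(X, ℝ),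
        @dist _ m.toPseudoMetricSpace.toDist f g = ⨆ x, min 1 |f x - g x|) ∧
      @UniformSpace.toTopologicalSpace _ m.toPseudoMetricSpace.toUniformSpace = fineTop X ∧
      @CompleteSpace C(X, ℝ) m.toPseudoMetricSpace.toUniformSpace :=
  ⟨(inferInstance : MetricSpace (ContinuousMapUnif X ℝ)), fun _ _ ↦ rfl,
    le_antisymm (ContinuousMapUnif.le_fineTop hX) (ContinuousMapUnif.fineTop_le X),
    (inferInstance : CompleteSpace (ContinuousMapUnif X ℝ))⟩

theorem stmt11 {X : Type*} [TopologicalSpace X] [T1Space X] [CompletelyRegularSpace X]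
    (hX : Pseudocompact X) :
    ∃ m : MetricSpace C(X, ℝ),
      (∀ f g : C(X, ℝ),
        @dist _ m.toPseudoMetricSpace.toDist f g = ⨆ x, min 1 |f x - g x|) ∧
      @UniformSpace.toTopologicalSpace _ m.toPseudoMetricSpace.toUniformSpace = fineTop X ∧
      @CompleteSpace C(X, ℝ) m.toPseudoMetricSpace.toUniformSpace :=
  stmt11_general hX
end

section
/- Let X be a topological space and (Y,d) a complete metric space. Then C(X,Y) with the graph topology is a Baire space: the intersection of countably many dense open subsets is dense. (More specifically, player α has a winning tactic in the strong Choquet game on C(X,Y) with the graph topology, given on a position (f, B(f,ε)) by responding with B(f, min(1,ε)/2).) -/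
/-- The graph topology on `C(X,Y)`. -/
def graphTopY (X Y : Type*) [TopologicalSpace X] [MetricSpace Y] :
    TopologicalSpace C(X, Y) :=
  TopologicalSpace.generateFrom
    {S | ∃ (f : C(X, Y)) (ε : X → ℝ),
      LowerSemicontinuous ε ∧ (∀ x, 0 < ε x) ∧ S = gball f ε}

open Filter Topology

section NestedBalls

variable {α : Type*} [PseudoMetricSpace α] {u : ℕ → α} {r : ℕ → ℝ}

theorem le_div_two_pow_of_nested (hu : ∀ n, dist (u n) (u (n + 1)) + 2 * r (n + 1) ≤ r n)
    (n : ℕ) : r n ≤ r 0 / 2 ^ n := by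
  induction n with
  | zero => simp
  | succ n ih =>
    have := hu n
    have := dist_nonneg (x := u n) (y := u (n + 1))
    rw [pow_succ, ← div_div]
    linarith

theorem dist_add_le_of_nested (hr : ∀ n, 0 < r n)
    (hu : ∀ n, dist (u n) (u (n + 1)) + 2 * r (n + 1) ≤ r n) {n m : ℕ} (hnm : n ≤ m) :
    dist (u n) (u m) + r m ≤ r n := by
  induction m, hnm using Nat.le_induction with
  | base => simp
  | succ m _ ih =>
    have := hu m
    have := hr (m + 1)
    have := dist_triangle (u n) (u m) (u (m + 1))
    linarith

theorem exists_dist_lt_of_nested [CompleteSpace α] (hr : ∀ n, 0 < r n)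
    (hu : ∀ n, dist (u n) (u (n + 1)) + 2 * r (n + 1) ≤ r n) :
    ∃ y, ∀ n, dist (u n) y < r n := by
  have hle : ∀ n m, n ≤ m → dist (u n) (u m) ≤ r n := fun n m hnm => by
    linarith [dist_add_le_of_nested hr hu hnm, hr m]
  have hr0 : Tendsto r atTop (𝓝 0) :=
    squeeze_zero (fun n => (hr n).le) (le_div_two_pow_of_nested hu)
      (tendsto_const_nhds.div_atTop (tendsto_pow_atTop_atTop_of_one_lt one_lt_two))
  obtain ⟨y, hy⟩ := cauchySeq_tendsto_of_complete (cauchySeq_of_le_tendsto_0' r hle hr0)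
  have hdist : ∀ n, dist (u n) y ≤ r n := fun n =>
    le_of_tendsto (tendsto_const_nhds.dist hy) (eventually_ge_atTop n |>.mono (hle n))
  -- the gap `2 * r (n + 1)` in the nesting condition leaves room for a strict inequality
  refine ⟨y, fun n => ?_⟩
  linarith [hu n, hdist (n + 1), hr (n + 1), dist_triangle (u n) (u (n + 1)) y]

end NestedBalls

theorem ContinuousMap.exists_dist_lt_of_nested {X Y : Type*} [TopologicalSpace X]
    [PseudoMetricSpace Y] [CompleteSpace Y] {f : ℕ → C(X, Y)} {ε : ℕ → X → ℝ} {C : ℝ}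
    (hε : ∀ n x, 0 < ε n x)
    (hf : ∀ n x, dist (f n x) (f (n + 1) x) + 2 * ε (n + 1) x ≤ ε n x)
    (hC : ∀ x, ε 0 x ≤ C) :
    ∃ F : C(X, Y), ∀ n x, dist (f n x) (F x) < ε n x := by
  choose F hF using fun x => _root_.exists_dist_lt_of_nested (hε · x) (hf · x)
  have hC_div : Tendsto (fun n : ℕ => C / 2 ^ n) atTop (𝓝 0) :=
    tendsto_const_nhds.div_atTop (tendsto_pow_atTop_atTop_of_one_lt one_lt_two)
  have hunif : TendstoUniformly (fun n x => f n x) F atTop := by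
    refine Metric.tendstoUniformly_iff.2 fun δ hδ => ?_
    filter_upwards [hC_div.eventually (gt_mem_nhds hδ)] with n hn x
    calc dist (F x) (f n x) = dist (f n x) (F x) := dist_comm _ _
      _ < ε n x := hF x n
      _ ≤ ε 0 x / 2 ^ n :=
        le_div_two_pow_of_nested (u := fun n => f n x) (r := fun n => ε n x) (hf · x) n
      _ ≤ C / 2 ^ n := by gcongr; exact hC x
      _ < δ := hn
  exact ⟨⟨F, hunif.continuous (Frequently.of_forall fun n => (f n).continuous)⟩,
    fun n x => hF x n⟩

section GraphTopology

variable {X Y : Type*} [TopologicalSpace X] [MetricSpace Y]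

structure IsGraphRadius (ε : X → ℝ) : Prop where
  lsc : LowerSemicontinuous ε
  pos : ∀ x, 0 < ε x

theorem isGraphRadius_one : IsGraphRadius fun _ : X => (1 : ℝ) :=
  ⟨lowerSemicontinuous_const, fun _ => one_pos⟩

theorem IsGraphRadius.min {ε δ : X → ℝ} (hε : IsGraphRadius ε) (hδ : IsGraphRadius δ) :
    IsGraphRadius fun x => min (ε x) (δ x) :=
  ⟨hε.lsc.inf hδ.lsc, fun x => lt_min (hε.pos x) (hδ.pos x)⟩

theorem IsGraphRadius.half {ε : X → ℝ} (hε : IsGraphRadius ε) : IsGraphRadius fun x => ε x / 2 :=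
  ⟨fun x y hy => (hε.lsc x (2 * y) (by linarith)).mono fun _ h => by linarith,
    fun x => half_pos (hε.pos x)⟩

theorem IsGraphRadius.sub_dist {ε : X → ℝ} (hε : IsGraphRadius ε) {f g : C(X, Y)}
    (hg : g ∈ gball f ε) : IsGraphRadius fun x => ε x - dist (f x) (g x) :=
  ⟨hε.lsc.add (f.continuous.dist g.continuous).neg.lowerSemicontinuous,
    fun x => sub_pos.2 (hg x)⟩

theorem mem_gball_self {f : C(X, Y)} {ε : X → ℝ} (hε : ∀ x, 0 < ε x) : f ∈ gball f ε :=
  fun x => by simpa using hε x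

theorem gball_mono {f : C(X, Y)} {δ ε : X → ℝ} (h : ∀ x, δ x ≤ ε x) : gball f δ ⊆ gball f ε :=
  fun _ hg x => (hg x).trans_le (h x)

theorem gball_sub_dist_subset (f g : C(X, Y)) (ε : X → ℝ) :
    gball g (fun x => ε x - dist (f x) (g x)) ⊆ gball f ε := fun h hh x => by
  linarith [hh x, dist_triangle (f x) (g x) (h x)]

theorem isOpen_gball {f : C(X, Y)} {ε : X → ℝ} (hε : IsGraphRadius ε) :
    IsOpen[graphTopY X Y] (gball f ε) :=
  TopologicalSpace.isOpen_generateFrom_of_mem ⟨f, ε, hε.lsc, hε.pos, rfl⟩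

theorem exists_gball_subset_of_isOpen {U : Set C(X, Y)} (hU : IsOpen[graphTopY X Y] U)
    {g : C(X, Y)} (hg : g ∈ U) : ∃ δ, IsGraphRadius δ ∧ gball g δ ⊆ U := by
  induction hU generalizing g with
  | basic _ hS =>
    obtain ⟨f, ε, hlsc, hpos, rfl⟩ := hS
    exact ⟨_, IsGraphRadius.sub_dist ⟨hlsc, hpos⟩ hg, gball_sub_dist_subset f g ε⟩
  | univ => exact ⟨_, isGraphRadius_one, Set.subset_univ _⟩
  | inter S T _ _ ihS ihT =>
    obtain ⟨δ, hδ, hδS⟩ := ihS hg.1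
    obtain ⟨δ', hδ', hδT⟩ := ihT hg.2
    exact ⟨_, hδ.min hδ', fun h hh =>
      ⟨hδS (gball_mono (fun _ => min_le_left _ _) hh),
        hδT (gball_mono (fun _ => min_le_right _ _) hh)⟩⟩
  | sUnion 𝒮 _ ih =>
    obtain ⟨S, hS, hgS⟩ := hg
    obtain ⟨δ, hδ, hδS⟩ := ih S hS hgS
    exact ⟨δ, hδ, hδS.trans (Set.subset_sUnion_of_mem hS)⟩

theorem exists_gball_subset_of_dense {U : Set C(X, Y)} (hUo : IsOpen[graphTopY X Y] U)
    (hUd : @Dense _ (graphTopY X Y) U) (f : C(X, Y)) {ε : X → ℝ} (hε : IsGraphRadius ε) :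
    ∃ g δ, IsGraphRadius δ ∧ gball g δ ⊆ U ∧ ∀ x, dist (f x) (g x) + 2 * δ x ≤ ε x := by
  obtain ⟨g, hgε, hgU⟩ := @Dense.inter_open_nonempty _ (graphTopY X Y) U hUd _
    (isOpen_gball hε) ⟨f, mem_gball_self hε.pos⟩
  obtain ⟨δ, hδ, hδU⟩ := exists_gball_subset_of_isOpen hUo hgU
  refine ⟨g, _, hδ.min (hε.sub_dist hgε).half,
    (gball_mono fun _ => min_le_left _ _).trans hδU, fun x => ?_⟩
  linarith [min_le_right (δ x) ((ε x - dist (f x) (g x)) / 2)]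

theorem exists_nested_gball_seq {U : ℕ → Set C(X, Y)} (hUo : ∀ n, IsOpen[graphTopY X Y] (U n))
    (hUd : ∀ n, @Dense _ (graphTopY X Y) (U n)) (f₀ : C(X, Y)) {ε₀ : X → ℝ}
    (hε₀ : IsGraphRadius ε₀) :
    ∃ (f : ℕ → C(X, Y)) (ε : ℕ → X → ℝ), f 0 = f₀ ∧ ε 0 = ε₀ ∧ (∀ n, IsGraphRadius (ε n)) ∧
      (∀ n, gball (f (n + 1)) (ε (n + 1)) ⊆ U n) ∧
      ∀ n x, dist (f n x) (f (n + 1) x) + 2 * ε (n + 1) x ≤ ε n x := by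
  have : Nonempty C(X, Y) := ⟨f₀⟩
  choose! g δ hδ hδU hδε using fun n (p : C(X, Y) × (X → ℝ)) (hp : IsGraphRadius p.2) =>
    exists_gball_subset_of_dense (hUo n) (hUd n) p.1 hp
  let seq : ℕ → C(X, Y) × (X → ℝ) := fun n =>
    Nat.rec (f₀, ε₀) (fun n p => (g n p, δ n p)) n
  have hseq : ∀ n, IsGraphRadius (seq n).2 := fun n => by
    induction n with
    | zero => exact hε₀
    | succ n ih => exact hδ n _ ih
  exact ⟨fun n => (seq n).1, fun n => (seq n).2, rfl, rfl, hseq,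
    fun n => hδU n _ (hseq n), fun n => hδε n _ (hseq n)⟩

end GraphTopology

theorem stmt19 {X Y : Type*} [TopologicalSpace X] [MetricSpace Y] [CompleteSpace Y] :
    @BaireSpace C(X, Y) (graphTopY X Y) := by
  let := graphTopY X Y
  refine ⟨fun U hUo hUd => dense_iff_inter_open.2 fun W hW ⟨g₀, hg₀⟩ => ?_⟩
  obtain ⟨ε₀, hε₀, hε₀W⟩ := exists_gball_subset_of_isOpen hW hg₀
  obtain ⟨f, ε, rfl, hε0, hε, hεU, hnested⟩ :=
    exists_nested_gball_seq hUo hUd g₀ (hε₀.min isGraphRadius_one)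
  obtain ⟨F, hF⟩ := ContinuousMap.exists_dist_lt_of_nested (fun n => (hε n).pos) hnested
    (C := 1) fun x => hε0 ▸ min_le_right _ _
  exact ⟨F, hε₀W (gball_mono (fun x => hε0 ▸ min_le_left _ _) (hF 0)),
    Set.mem_iInter.2 fun n => hεU n (hF (n + 1))⟩
end
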